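/- arXiv:2505.11938 — 4 statements merged into one kernel-verified Lean document; each statement's English description precedes it below -/
import Mathlib

section
/- Let $H_n$ and $W_m$ be finite-dimensional subspaces of a Hilbert space $V$ with $\beta(H_n, W_m) := \inf_{v \in H_n\setminus\{0\}} \|P_{W_m} v\|/\|v\| > 0$. Define $\widetilde{H}_n := H_n \oplus (H_n^\perp \cap W_m)$. Then $\beta(\widetilde{H}_n, W_m) = \beta(H_n, W_m)$. -/
/-!
Split `v = h + w` with `h ∈ Hₙ` and `w ∈ Hₙᗮ ⊓ Wₘ`. Since `w` lies in `Wₘ` and is orthogonal to `h`,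
both `v` and `P v = P h + w` are orthogonal sums, so `‖v‖² = ‖h‖² + ‖w‖²` and
`‖P v‖² = ‖P h‖² + ‖w‖²`. With `β ≤ 1` this gives `β ‖v‖ ≤ ‖P v‖`, hence `β(H̃ₙ, Wₘ) ≥ β(Hₙ, Wₘ)`;
the reverse inequality holds because `β(·, Wₘ)` is antitone.
-/

/-- The stability constant `β(A,B) = inf_{v ∈ A, v ≠ 0} ‖P_B v‖ / ‖v‖`. -/
noncomputable def beta {V : Type*} [NormedAddCommGroup V] [InnerProductSpace ℝ V]
    (A B : Submodule ℝ V) [B.HasOrthogonalProjection] : ℝ :=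
  sInf {r : ℝ | ∃ v ∈ A, v ≠ 0 ∧ r = ‖(B.orthogonalProjectionOnto v : V)‖ / ‖v‖}

open Submodule

section Beta

variable {V : Type*} [NormedAddCommGroup V] [InnerProductSpace ℝ V]
  {A A' B : Submodule ℝ V} [B.HasOrthogonalProjection]

lemma bddBelow_beta_ratios :
    BddBelow {r : ℝ | ∃ v ∈ A, v ≠ 0 ∧ r = ‖(B.orthogonalProjectionOnto v : V)‖ / ‖v‖} :=
  ⟨0, by rintro _ ⟨v, -, -, rfl⟩; positivity⟩

lemma beta_bot : beta ⊥ B = 0 := by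
  simp [beta]

lemma ne_bot_of_beta_pos (hβ : 0 < beta A B) : A ≠ ⊥ := by
  rintro rfl
  simp [beta_bot] at hβ

lemma beta_nonneg : 0 ≤ beta A B :=
  Real.sInf_nonneg (by rintro _ ⟨v, -, -, rfl⟩; positivity)

lemma beta_mul_norm_le {v : V} (hv : v ∈ A) : beta A B * ‖v‖ ≤ ‖B.starProjection v‖ := by
  rcases eq_or_ne v 0 with rfl | hv0
  · simp
  · rw [← le_div_iff₀ (norm_pos_iff.mpr hv0)]
    exact csInf_le bddBelow_beta_ratios ⟨v, hv, hv0, rfl⟩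

lemma beta_le_one : beta A B ≤ 1 := by
  rcases eq_or_ne A ⊥ with rfl | hA
  · simp [beta_bot]
  obtain ⟨v, hv, hv0⟩ := exists_mem_ne_zero_of_ne_bot hA
  refine le_of_mul_le_mul_right ?_ (norm_pos_iff.mpr hv0)
  rw [one_mul]
  exact (beta_mul_norm_le hv).trans (B.norm_starProjection_apply_le v)

lemma le_beta {c : ℝ} (hA : A ≠ ⊥) (h : ∀ v ∈ A, c * ‖v‖ ≤ ‖B.starProjection v‖) :
    c ≤ beta A B := by
  obtain ⟨v, hv, hv0⟩ := exists_mem_ne_zero_of_ne_bot hA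
  refine le_csInf ⟨_, v, hv, hv0, rfl⟩ ?_
  rintro _ ⟨u, hu, hu0, rfl⟩
  rw [le_div_iff₀ (norm_pos_iff.mpr hu0)]
  exact h u hu

lemma beta_anti (hA : A ≠ ⊥) (hAA' : A ≤ A') : beta A' B ≤ beta A B :=
  le_beta hA fun _ hv => beta_mul_norm_le (hAA' hv)

lemma norm_starProjection_add_sq {h w : V} (hw : w ∈ B) (hhw : inner ℝ h w = 0) :
    ‖B.starProjection (h + w)‖ ^ 2 = ‖B.starProjection h‖ ^ 2 + ‖w‖ ^ 2 := by
  have hPw : B.starProjection w = w := starProjection_eq_self_iff.mpr hw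
  have hPhw : inner ℝ (B.starProjection h) w = 0 := by
    rw [inner_starProjection_left_eq_right, hPw, hhw]
  rw [map_add, hPw, norm_add_sq_real, hPhw]
  ring

lemma beta_mul_norm_le_of_mem_sup_orthogonal_inf {v : V} (hv : v ∈ A ⊔ (Aᗮ ⊓ B)) :
    beta A B * ‖v‖ ≤ ‖B.starProjection v‖ := by
  obtain ⟨h, hh, w, ⟨hwA, hwB⟩, rfl⟩ := mem_sup.mp hv
  have hhw : inner ℝ h w = 0 := hwA h hh
  set β := beta A B
  have hβ0 : 0 ≤ β := beta_nonneg
  have hβ1 : β ≤ 1 := beta_le_one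
  have hPh : β * ‖h‖ ≤ ‖B.starProjection h‖ := beta_mul_norm_le hh
  have hsq : (β * ‖h + w‖) ^ 2 ≤ ‖B.starProjection (h + w)‖ ^ 2 :=
    calc (β * ‖h + w‖) ^ 2 = (β * ‖h‖) ^ 2 + β ^ 2 * ‖w‖ ^ 2 := by
          rw [mul_pow, norm_add_sq_real, hhw]; ring
      _ ≤ ‖B.starProjection h‖ ^ 2 + ‖w‖ ^ 2 := by
          gcongr
          exact mul_le_of_le_one_left (sq_nonneg _) (pow_le_one₀ hβ0 hβ1)
      _ = ‖B.starProjection (h + w)‖ ^ 2 := (norm_starProjection_add_sq hwB hhw).symm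
  exact (pow_le_pow_iff_left₀ (by positivity) (norm_nonneg _) two_ne_zero).mp hsq

end Beta

theorem stmt_6_general {V : Type*} [NormedAddCommGroup V] [InnerProductSpace ℝ V]
    (Hn Wm : Submodule ℝ V) [FiniteDimensional ℝ Wm]
    (hβpos : 0 < beta Hn Wm) :
    beta (Hn ⊔ (Hnᗮ ⊓ Wm)) Wm = beta Hn Wm := by
  have hHn : Hn ≠ ⊥ := ne_bot_of_beta_pos hβpos
  exact le_antisymm (beta_anti hHn le_sup_left)
    (le_beta (ne_bot_of_le_ne_bot hHn le_sup_left)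
      fun _ hv => beta_mul_norm_le_of_mem_sup_orthogonal_inf hv)

theorem stmt_6 {V : Type*} [NormedAddCommGroup V] [InnerProductSpace ℝ V] [CompleteSpace V]
    (Hn Wm : Submodule ℝ V) [FiniteDimensional ℝ Hn] [FiniteDimensional ℝ Wm]
    (hβpos : 0 < beta Hn Wm) :
    beta (Hn ⊔ (Hnᗮ ⊓ Wm)) Wm = beta Hn Wm :=
  stmt_6_general Hn Wm hβpos
end

section
/- Let $v : [0,T] \to \mathbb{R}$ be a nonnegative differentiable function satisfying $v'(t) \le L v(t) + C(t) v(t)^{1/2}$ for all $t \in [0,T]$, where $L \in \mathbb{R}$ and $C : [0,T] \to \mathbb{R}$ is continuous and nonnegative. Then for all $t \in [0,T]$, $v(t) \le \left( v(0)^{1/2} e^{Lt/2} + \tfrac{1}{2}\int_0^t C(s) e^{L(t-s)/2}\, ds \right)^2$. -/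
/-!
The substitution `w = √v` turns the hypothesis into the linear inequality
`w' ≤ (L/2) w + C/2`, which the integrating factor `exp (-L t / 2)` integrates. As `√` is not
differentiable at `0`, one works with `w_ε = √(v + ε²)` instead: since `w_ε ≥ ε`, the error
term `-L ε² / (2 w_ε)` is at most `|L| ε / 2`, so `w_ε' ≤ (L/2) w_ε + C/2 + |L| ε / 2`.
Letting `ε → 0` gives the bound on `√v`, and squaring it gives the claim.
-/

open Set Real Filter Topology intervalIntegral

theorem le_exp_mul_add_integral_of_hasDerivAt_le {a b K : ℝ} {w w' g : ℝ → ℝ}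
    (hw : ContinuousOn w (Icc a b)) (hw' : ∀ t ∈ Ioo a b, HasDerivAt w (w' t) t)
    (hg : ContinuousOn g (Icc a b)) (hle : ∀ t ∈ Ioo a b, w' t ≤ K * w t + g t) :
    ∀ t ∈ Icc a b, w t ≤ exp (K * (t - a)) * w a + ∫ s in a..t, g s * exp (K * (t - s)) := by
  intro t ht
  have hab : a ≤ b := ht.1.trans ht.2
  set G : ℝ → ℝ := fun s => g s * exp (-(K * s))
  have hG : ContinuousOn G (Icc a b) := hg.mul (by fun_prop)
  set u : ℝ → ℝ := fun s => exp (-(K * s)) * w s - ∫ r in a..s, G r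
  have hu : AntitoneOn u (Icc a b) := by
    refine antitoneOn_of_hasDerivWithinAt_nonpos (convex_Icc a b)
      (f' := fun s => exp (-(K * s)) * (w' s - (K * w s + g s))) ?_ ?_ ?_
    · refine ContinuousOn.sub (by fun_prop) ?_
      rw [← uIcc_of_le hab]
      exact continuousOn_primitive_interval' (hG.intervalIntegrable_of_Icc hab) left_mem_uIcc
    · rw [interior_Icc]
      intro s hs
      have hGs : HasDerivAt (fun x => ∫ r in a..x, G r) (G s) s :=
        integral_hasDerivAt_right
          ((hG.mono (Icc_subset_Icc le_rfl hs.2.le)).intervalIntegrable_of_Icc hs.1.le)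
          ((hG.mono Ioo_subset_Icc_self).stronglyMeasurableAtFilter isOpen_Ioo s hs)
          (hG.continuousAt (Icc_mem_nhds hs.1 hs.2))
      have hexp : HasDerivAt (fun x => exp (-(K * x))) (exp (-(K * s)) * -K) s := by
        simpa using ((hasDerivAt_id s).const_mul K).neg.exp
      refine (((hexp.mul (hw' s hs)).sub hGs).congr_deriv ?_).hasDerivWithinAt
      simp only [G]
      ring
    · rw [interior_Icc]
      exact fun s hs => mul_nonpos_of_nonneg_of_nonpos (exp_pos _).le (by linarith [hle s hs])
  have hut : u t ≤ u a := hu ⟨le_rfl, hab⟩ ht ht.1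
  have hexp_sub : ∀ s, exp (K * t) * exp (-(K * s)) = exp (K * (t - s)) := fun s => by
    rw [← exp_add]; ring_nf
  calc w t = exp (K * t) * (exp (-(K * t)) * w t) := by
        rw [← mul_assoc, hexp_sub, sub_self, mul_zero, exp_zero, one_mul]
    _ ≤ exp (K * t) * (exp (-(K * a)) * w a + ∫ r in a..t, G r) := by
        gcongr
        simpa [u] using hut
    _ = exp (K * (t - a)) * w a + ∫ s in a..t, g s * exp (K * (t - s)) := by
        rw [mul_add, ← mul_assoc, hexp_sub, ← integral_const_mul]
        congr 1
        refine integral_congr fun s _ => ?_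
        simp only [G, ← hexp_sub s]
        ring

theorem div_two_sqrt_add_sq_le {L c x x' ε : ℝ} (hx : 0 ≤ x) (hc : 0 ≤ c) (hε : 0 < ε)
    (h : x' ≤ L * x + c * √x) :
    x' / (2 * √(x + ε ^ 2)) ≤ L / 2 * √(x + ε ^ 2) + (c / 2 + |L| * ε / 2) := by
  set w := √(x + ε ^ 2)
  have hw_sq : w ^ 2 = x + ε ^ 2 := sq_sqrt (by positivity)
  have hε_le : ε ≤ w := le_sqrt_of_sq_le (by linarith)
  have hsqrt_le : √x ≤ w := sqrt_le_sqrt (by linarith [sq_nonneg ε])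
  rw [div_le_iff₀ (by linarith)]
  nlinarith [mul_le_mul_of_nonneg_left hsqrt_le hc, neg_abs_le L, abs_nonneg L,
    mul_le_mul_of_nonneg_left hε_le (mul_nonneg (abs_nonneg L) hε.le)]

theorem sqrt_add_sq_le_of_deriv_le_mul_add_mul_sqrt {T L ε : ℝ} {v v' C : ℝ → ℝ} (hε : 0 < ε)
    (hv0 : ∀ t ∈ Icc 0 T, 0 ≤ v t) (hderiv : ∀ t ∈ Icc 0 T, HasDerivAt v (v' t) t)
    (hC : ContinuousOn C (Icc 0 T)) (hC0 : ∀ t ∈ Icc 0 T, 0 ≤ C t)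
    (hineq : ∀ t ∈ Icc 0 T, v' t ≤ L * v t + C t * √(v t)) {t : ℝ} (ht : t ∈ Icc 0 T) :
    √(v t + ε ^ 2) ≤ √(v 0 + ε ^ 2) * exp (L * t / 2)
      + ((1 / 2) * (∫ s in (0 : ℝ)..t, C s * exp (L * (t - s) / 2))
        + ε * (|L| / 2 * ∫ s in (0 : ℝ)..t, exp (L * (t - s) / 2))) := by
  have hpos : ∀ s ∈ Icc 0 T, v s + ε ^ 2 ≠ 0 := fun s hs => by
    have := hv0 s hs; positivity
  have hw' : ∀ s ∈ Icc 0 T, HasDerivAt (fun x => √(v x + ε ^ 2))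
      (v' s / (2 * √(v s + ε ^ 2))) s := fun s hs =>
    ((hderiv s hs).add_const _).sqrt (hpos s hs)
  have key := le_exp_mul_add_integral_of_hasDerivAt_le (K := L / 2)
    (g := fun s => C s / 2 + |L| * ε / 2)
    (fun s hs => (hw' s hs).continuousAt.continuousWithinAt)
    (fun s hs => hw' s (Ioo_subset_Icc_self hs)) ((hC.div_const 2).add continuousOn_const)
    (fun s hs => div_two_sqrt_add_sq_le (hv0 s (Ioo_subset_Icc_self hs))
      (hC0 s (Ioo_subset_Icc_self hs)) hε (hineq s (Ioo_subset_Icc_self hs))) t ht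
  have hCt : IntervalIntegrable (fun s => C s * exp (L * (t - s) / 2)) MeasureTheory.volume 0 t :=
    ((hC.mono (Icc_subset_Icc le_rfl ht.2)).mul (by fun_prop)).intervalIntegrable_of_Icc ht.1
  have hEt : IntervalIntegrable (fun s => exp (L * (t - s) / 2)) MeasureTheory.volume 0 t :=
    (by fun_prop : Continuous fun s => exp (L * (t - s) / 2)).intervalIntegrable 0 t
  convert key using 2
  · ring_nf
  · rw [← integral_const_mul, ← integral_const_mul, ← integral_const_mul,
      ← integral_add (hCt.const_mul _) ((hEt.const_mul _).const_mul _)]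
    refine integral_congr fun s _ => ?_
    simp only [div_mul_eq_mul_div]
    ring

theorem stmt_8_general {T L : ℝ} (v v' C : ℝ → ℝ)
    (hv0 : ∀ t ∈ Set.Icc 0 T, 0 ≤ v t)
    (hderiv : ∀ t ∈ Set.Icc 0 T, HasDerivAt v (v' t) t)
    (hC : ContinuousOn C (Set.Icc 0 T))
    (hC0 : ∀ t ∈ Set.Icc 0 T, 0 ≤ C t)
    (hineq : ∀ t ∈ Set.Icc 0 T, v' t ≤ L * v t + C t * Real.sqrt (v t)) :
    ∀ t ∈ Set.Icc 0 T,
      v t ≤ (Real.sqrt (v 0) * Real.exp (L * t / 2)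
        + (1 / 2) * ∫ s in (0:ℝ)..t, C s * Real.exp (L * (t - s) / 2)) ^ 2 := by
  intro t ht
  set I := ∫ s in (0:ℝ)..t, C s * exp (L * (t - s) / 2)
  set J := ∫ s in (0:ℝ)..t, exp (L * (t - s) / 2)
  have hreg : ∀ ε > 0, √(v t + ε ^ 2) ≤ √(v 0 + ε ^ 2) * exp (L * t / 2)
      + ((1 / 2) * I + ε * (|L| / 2 * J)) := fun ε hε =>
    sqrt_add_sq_le_of_deriv_le_mul_add_mul_sqrt hε hv0 hderiv hC hC0 hineq ht
  clear_value I J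
  have hlim : √(v t) ≤ √(v 0) * exp (L * t / 2) + (1 / 2) * I := by
    refine le_of_tendsto_of_tendsto (b := 𝓝[>] (0 : ℝ)) ?_ ?_ (eventually_nhdsWithin_of_forall hreg)
    all_goals
      refine (Continuous.tendsto' ?_ 0 _ ?_).mono_left nhdsWithin_le_nhds
      · fun_prop
      · simp
  exact (sqrt_le_iff.mp hlim).2

theorem stmt_8 {T L : ℝ} (hT : 0 ≤ T) (v v' C : ℝ → ℝ)
    (hv0 : ∀ t ∈ Set.Icc 0 T, 0 ≤ v t)
    (hderiv : ∀ t ∈ Set.Icc 0 T, HasDerivAt v (v' t) t)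
    (hC : ContinuousOn C (Set.Icc 0 T))
    (hC0 : ∀ t ∈ Set.Icc 0 T, 0 ≤ C t)
    (hineq : ∀ t ∈ Set.Icc 0 T, v' t ≤ L * v t + C t * Real.sqrt (v t)) :
    ∀ t ∈ Set.Icc 0 T,
      v t ≤ (Real.sqrt (v 0) * Real.exp (L * t / 2)
        + (1 / 2) * ∫ s in (0:ℝ)..t, C s * Real.exp (L * (t - s) / 2)) ^ 2 :=
  stmt_8_general v v' C hv0 hderiv hC hC0 hineq
end

section
/- Let $T_n$ be a closed subspace of a Hilbert space $V$, let $f \in V$, and suppose $\theta'$ is chosen such that its image $\dot{v}^* \in T_n$ minimizes $|\ell(\dot v) - \ell(f)|_Z$ over $\dot v \in T_n$, where $\ell : V \to \mathbb{R}^m$ is a continuous linear map with $\mathrm{Lip}_Z(\ell) < \infty$ and $\beta_Z(T_n,\ell) > 0$. Then $\|f - \dot{v}^*\|_V \le (1 + 2\,\mathrm{Lip}_Z(\ell)\,\beta_Z(T_n,\ell)^{-1}) \inf_{\dot v \in T_n} \|\dot v - f\|_V$. -/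
theorem stmt_10 {V : Type*} [NormedAddCommGroup V] [InnerProductSpace ℝ V] [CompleteSpace V]
    {m : ℕ} (Tn : Submodule ℝ V) [FiniteDimensional ℝ Tn]
    (ℓ : Fin m → (V →L[ℝ] ℝ))
    (Zn : (Fin m → ℝ) → ℝ)
    (hZ0 : ∀ z, Zn z = 0 ↔ z = 0)
    (hZadd : ∀ z w, Zn (z + w) ≤ Zn z + Zn w)
    (hZsmul : ∀ (c : ℝ) z, Zn (c • z) = |c| * Zn z)
    (L β : ℝ)
    (hL : L = sSup {r : ℝ | ∃ v : V, v ≠ 0 ∧ r = Zn (fun i => ℓ i v) / ‖v‖})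
    (hβ : β = sInf {r : ℝ | ∃ v ∈ Tn, v ≠ 0 ∧ r = Zn (fun i => ℓ i v) / ‖v‖})
    (hβpos : 0 < β)
    (f vstar : V) (hvTn : vstar ∈ Tn)
    (hmin : ∀ w ∈ Tn, Zn (fun i => ℓ i vstar - ℓ i f) ≤ Zn (fun i => ℓ i w - ℓ i f)) :
    ‖f - vstar‖ ≤ (1 + 2 * L * β⁻¹) * sInf {r : ℝ | ∃ w ∈ Tn, r = ‖w - f‖} := by
  have Zn0 : Zn 0 = 0 := (hZ0 0).mpr rfl
  have Znneg : ∀ z, Zn (-z) = Zn z := by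
    intro z
    have := hZsmul (-1) z
    simpa using this
  have Znnonneg : ∀ z, 0 ≤ Zn z := by
    intro z
    have h := hZadd z (-z)
    rw [add_neg_cancel, Zn0, Znneg] at h
    linarith
  have Znsum : ∀ (s : Finset (Fin m)) (g : Fin m → Fin m → ℝ),
      Zn (∑ i ∈ s, g i) ≤ ∑ i ∈ s, Zn (g i) := by
    intro s g
    induction s using Finset.cons_induction with
    | empty => simp [Zn0]
    | cons a s ha ih =>
      rw [Finset.sum_cons, Finset.sum_cons]
      exact le_trans (hZadd _ _) (by linarith)
  have Zbound : ∀ z : Fin m → ℝ, Zn z ≤ ∑ i, |z i| * Zn (Pi.single i 1) := by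
    intro z
    have hz : z = ∑ i, z i • (Pi.single i 1 : Fin m → ℝ) := by
      ext j
      simp [Pi.single_apply, Finset.sum_ite_eq']
    calc Zn z = Zn (∑ i, z i • (Pi.single i 1 : Fin m → ℝ)) := by rw [← hz]
      _ ≤ ∑ i, Zn (z i • (Pi.single i 1 : Fin m → ℝ)) := Znsum _ _
      _ = ∑ i, |z i| * Zn (Pi.single i 1) := by simp [hZsmul]
  set C := ∑ i, ‖ℓ i‖ * Zn (Pi.single i (1:ℝ)) with hC
  have hZℓ : ∀ v : V, Zn (fun i => ℓ i v) ≤ C * ‖v‖ := by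
    intro v
    calc Zn (fun i => ℓ i v) ≤ ∑ i, |ℓ i v| * Zn (Pi.single i 1) := Zbound _
      _ ≤ ∑ i, (‖ℓ i‖ * ‖v‖) * Zn (Pi.single i 1) := by
          apply Finset.sum_le_sum
          intro i _
          apply mul_le_mul_of_nonneg_right _ (Znnonneg _)
          rw [← Real.norm_eq_abs]
          exact (ℓ i).le_opNorm v
      _ = C * ‖v‖ := by rw [hC, Finset.sum_mul]; congr 1; ext i; ring
  have hLset : BddAbove {r : ℝ | ∃ v : V, v ≠ 0 ∧ r = Zn (fun i => ℓ i v) / ‖v‖} := by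
    refine ⟨C, ?_⟩
    rintro r ⟨v, hv, rfl⟩
    rw [div_le_iff₀ (norm_pos_iff.mpr hv)]
    exact hZℓ v
  have hLnonneg : 0 ≤ L := by
    rw [hL]
    apply Real.sSup_nonneg
    rintro r ⟨v, hv, rfl⟩
    exact div_nonneg (Znnonneg _) (norm_nonneg _)
  have hLle : ∀ v : V, Zn (fun i => ℓ i v) ≤ L * ‖v‖ := by
    intro v
    by_cases hv : v = 0
    · have : (fun i => ℓ i v) = 0 := by ext i; simp [hv]
      rw [this, Zn0, hv]
      simp
    · have h1 : Zn (fun i => ℓ i v) / ‖v‖ ≤ L := hL ▸ le_csSup hLset ⟨v, hv, rfl⟩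
      rw [div_le_iff₀ (norm_pos_iff.mpr hv)] at h1
      linarith [h1, mul_comm L ‖v‖]
  have hβle : ∀ v ∈ Tn, β * ‖v‖ ≤ Zn (fun i => ℓ i v) := by
    intro v hv
    by_cases h0 : v = 0
    · have : (fun i => ℓ i v) = 0 := by ext i; simp [h0]
      rw [this, Zn0, h0]
      simp
    · have hbdd : BddBelow {r : ℝ | ∃ v ∈ Tn, v ≠ 0 ∧ r = Zn (fun i => ℓ i v) / ‖v‖} := by
        refine ⟨0, ?_⟩
        rintro r ⟨w, _, hw, rfl⟩
        exact div_nonneg (Znnonneg _) (norm_nonneg _)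
      have h1 : β ≤ Zn (fun i => ℓ i v) / ‖v‖ := hβ ▸ csInf_le hbdd ⟨v, hv, h0, rfl⟩
      rw [le_div_iff₀ (norm_pos_iff.mpr h0)] at h1
      linarith [h1]
  set c := 2 * L * β⁻¹ with hc
  have hcnonneg : 0 ≤ c := by positivity
  -- key pointwise estimate
  have key : ∀ w ∈ Tn, ‖f - vstar‖ ≤ (1 + c) * ‖w - f‖ := by
    intro w hw
    have h1 : β * ‖w - vstar‖ ≤ Zn (fun i => ℓ i (w - vstar)) :=
      hβle _ (Submodule.sub_mem Tn hw hvTn)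
    have heq : (fun i => ℓ i (w - vstar)) =
        (fun i => ℓ i w - ℓ i f) + -(fun i => ℓ i vstar - ℓ i f) := by
      ext i; simp [map_sub]
    have h2 : Zn (fun i => ℓ i (w - vstar)) ≤
        Zn (fun i => ℓ i w - ℓ i f) + Zn (fun i => ℓ i vstar - ℓ i f) := by
      rw [heq]
      exact le_trans (hZadd _ _) (by rw [Znneg])
    have h3 : Zn (fun i => ℓ i vstar - ℓ i f) ≤ Zn (fun i => ℓ i w - ℓ i f) := hmin w hw
    have h4 : Zn (fun i => ℓ i w - ℓ i f) ≤ L * ‖w - f‖ := by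
      have : (fun i => ℓ i w - ℓ i f) = fun i => ℓ i (w - f) := by
        ext i; simp [map_sub]
      rw [this]
      exact hLle _
    have h5 : β * ‖w - vstar‖ ≤ 2 * L * ‖w - f‖ := by linarith
    have h6 : ‖w - vstar‖ ≤ c * ‖w - f‖ := by
      rw [hc]
      rw [← le_div_iff₀' hβpos] at h5
      calc ‖w - vstar‖ ≤ 2 * L * ‖w - f‖ / β := h5
        _ = 2 * L * β⁻¹ * ‖w - f‖ := by field_simp
    have h7 : ‖f - vstar‖ ≤ ‖f - w‖ + ‖w - vstar‖ := norm_sub_le_norm_sub_add_norm_sub f w vstar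
    have h8 : ‖f - w‖ = ‖w - f‖ := norm_sub_rev f w
    linarith
  set S := {r : ℝ | ∃ w ∈ Tn, r = ‖w - f‖} with hS
  have hSne : S.Nonempty := ⟨‖(0:V) - f‖, 0, Submodule.zero_mem Tn, rfl⟩
  have hpos : (0:ℝ) < 1 + c := by linarith
  have hfinal : ‖f - vstar‖ / (1 + c) ≤ sInf S := by
    apply le_csInf hSne
    rintro r ⟨w, hw, rfl⟩
    rw [div_le_iff₀ hpos]
    linarith [key w hw, mul_comm (1 + c) ‖w - f‖]
  rw [div_le_iff₀ hpos] at hfinal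
  linarith [hfinal, mul_comm (sInf S) (1 + c)]
end

section
/- Let $V$ be a Hilbert space, $\ell : V \to \mathbb{R}^m$ a continuous linear map with $\mathrm{Lip}_Z(\ell) < \infty$, $T_n \subset V$ a finite-dimensional subspace with $\beta_Z(T_n, \ell) > 0$, and $f \in V$. Let $z \in \mathbb{R}^m$ satisfy $|z - \ell(f)|_p \le \eta$ in a $p$-norm, and let $\dot v^* \in T_n$ minimize $\dot v \mapsto |\ell(\dot v) - z|_Z$ over $T_n$. Then $\|f - \dot v^*\|_V \le (1 + 2\,\mathrm{Lip}_Z(\ell)\beta_Z(T_n,\ell)^{-1})\inf_{\dot v \in T_n}\|\dot v - f\|_V + 4\nu_p\,\beta_Z(T_n,\ell)^{-1}\eta$, where $\nu_p = \max_{z'\neq 0} |z'|_Z/|z'|_p$. -/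
section Aux

variable {m : ℕ} {N : (Fin m → ℝ) → ℝ}

lemma aux_zero (hsmul : ∀ (c : ℝ) z, N (c • z) = |c| * N z) : N 0 = 0 := by
  have := hsmul 0 0
  simpa using this

lemma aux_neg (hsmul : ∀ (c : ℝ) z, N (c • z) = |c| * N z) (z : Fin m → ℝ) :
    N (-z) = N z := by
  have := hsmul (-1) z
  simpa using this

lemma aux_nonneg (hadd : ∀ z w, N (z + w) ≤ N z + N w)
    (hsmul : ∀ (c : ℝ) z, N (c • z) = |c| * N z) (z : Fin m → ℝ) : 0 ≤ N z := by
  have h0 : N 0 = 0 := aux_zero hsmul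
  have h1 : N (-z) = N z := aux_neg hsmul z
  have h2 := hadd z (-z)
  rw [add_neg_cancel, h0, h1] at h2
  linarith

lemma aux_sum (hadd : ∀ z w, N (z + w) ≤ N z + N w)
    (hsmul : ∀ (c : ℝ) z, N (c • z) = |c| * N z)
    {ι : Type*} (s : Finset ι) (g : ι → (Fin m → ℝ)) :
    N (∑ i ∈ s, g i) ≤ ∑ i ∈ s, N (g i) := by
  classical
  induction s using Finset.induction with
  | empty => simp [aux_zero hsmul]
  | @insert a s ha ih =>
    rw [Finset.sum_insert ha, Finset.sum_insert ha]
    exact le_trans (hadd _ _) (by linarith)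

lemma aux_bound (hadd : ∀ z w, N (z + w) ≤ N z + N w)
    (hsmul : ∀ (c : ℝ) z, N (c • z) = |c| * N z) (z : Fin m → ℝ) :
    N z ≤ (∑ i, N (Pi.single i (1:ℝ))) * ‖z‖ := by
  have hz : z = ∑ i, z i • (Pi.single i (1:ℝ) : Fin m → ℝ) := by
    funext j
    simp [Finset.sum_apply, Pi.single_apply, mul_ite]
  calc N z = N (∑ i, z i • (Pi.single i (1:ℝ) : Fin m → ℝ)) := by rw [← hz]
    _ ≤ ∑ i, N (z i • (Pi.single i (1:ℝ) : Fin m → ℝ)) := aux_sum hadd hsmul _ _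
    _ = ∑ i, |z i| * N (Pi.single i (1:ℝ)) := by simp [hsmul]
    _ ≤ ∑ i, ‖z‖ * N (Pi.single i (1:ℝ)) := by
        refine Finset.sum_le_sum fun i _ => ?_
        refine mul_le_mul_of_nonneg_right ?_ (aux_nonneg hadd hsmul _)
        simpa [Real.norm_eq_abs] using norm_le_pi_norm z i
    _ = (∑ i, N (Pi.single i (1:ℝ))) * ‖z‖ := by rw [Finset.sum_mul]; simp [mul_comm]

lemma aux_lower (hN0 : ∀ z, N z = 0 ↔ z = 0)
    (hadd : ∀ z w, N (z + w) ≤ N z + N w)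
    (hsmul : ∀ (c : ℝ) z, N (c • z) = |c| * N z)
    (z0 : Fin m → ℝ) (hz0 : z0 ≠ 0) :
    ∃ c > 0, ∀ z, c * ‖z‖ ≤ N z := by
  set C : ℝ := ∑ i, N (Pi.single i (1:ℝ)) with hC
  have hCnn : 0 ≤ C := Finset.sum_nonneg fun i _ => aux_nonneg hadd hsmul _
  have hlip : ∀ a b : Fin m → ℝ, dist (N a) (N b) ≤ C.toNNReal * dist a b := by
    intro a b
    rw [Real.dist_eq, dist_eq_norm, Real.coe_toNNReal _ hCnn]
    have h1 : N a ≤ N b + N (a - b) := by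
      have := hadd b (a - b); simpa using this
    have h2 : N b ≤ N a + N (a - b) := by
      have := hadd a (b - a)
      have hneg : N (b - a) = N (a - b) := by
        rw [← aux_neg hsmul (b - a), neg_sub]
      simp only [add_sub_cancel] at this
      rw [hneg] at this
      linarith
    have h3 : N (a - b) ≤ C * ‖a - b‖ := aux_bound hadd hsmul _
    rw [abs_le]
    constructor <;> linarith
  have hcont : Continuous N := (LipschitzWith.of_dist_le_mul hlip).continuous
  have hne : (Metric.sphere (0 : Fin m → ℝ) 1).Nonempty := by
    refine ⟨‖z0‖⁻¹ • z0, ?_⟩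
    have h : ‖z0‖ ≠ 0 := norm_ne_zero_iff.mpr hz0
    simp [norm_smul, abs_of_nonneg (inv_nonneg.mpr (norm_nonneg z0)),
      inv_mul_cancel₀ h]
  obtain ⟨w, hwS, hw⟩ := (isCompact_sphere (0 : Fin m → ℝ) 1).exists_isMinOn hne
    hcont.continuousOn
  have hwnorm : ‖w‖ = 1 := by simpa using hwS
  have hwne : w ≠ 0 := by
    intro h; rw [h] at hwnorm; simp at hwnorm
  have hc : 0 < N w := by
    rcases lt_or_eq_of_le (aux_nonneg hadd hsmul w) with h | h
    · exact h
    · exact absurd ((hN0 w).mp h.symm) hwne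
  refine ⟨N w, hc, fun z => ?_⟩
  rcases eq_or_ne z 0 with rfl | hz
  · simp [aux_zero hsmul]
  · have hzn : (0:ℝ) < ‖z‖ := norm_pos_iff.mpr hz
    have hu : (‖z‖⁻¹ • z) ∈ Metric.sphere (0 : Fin m → ℝ) 1 := by
      simp [norm_smul, abs_of_nonneg (inv_nonneg.mpr (norm_nonneg z)),
        inv_mul_cancel₀ (ne_of_gt hzn)]
    have hle : N w ≤ N (‖z‖⁻¹ • z) := hw hu
    rw [hsmul] at hle
    have habs : |‖z‖⁻¹| = ‖z‖⁻¹ := abs_of_nonneg (inv_nonneg.mpr (norm_nonneg z))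
    rw [habs] at hle
    have hle2 : N w * ‖z‖ ≤ ‖z‖⁻¹ * N z * ‖z‖ :=
      mul_le_mul_of_nonneg_right hle (norm_nonneg z)
    calc N w * ‖z‖ ≤ ‖z‖⁻¹ * N z * ‖z‖ := hle2
      _ = N z := by field_simp
    
end Aux

theorem stmt_15 {V : Type*} [NormedAddCommGroup V] [InnerProductSpace ℝ V] [CompleteSpace V]
    {m : ℕ} (Tn : Submodule ℝ V) [FiniteDimensional ℝ Tn]
    (ℓ : Fin m → (V →L[ℝ] ℝ))
    (Zn Pn : (Fin m → ℝ) → ℝ)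
    (hZ0 : ∀ z, Zn z = 0 ↔ z = 0)
    (hZadd : ∀ z w, Zn (z + w) ≤ Zn z + Zn w)
    (hZsmul : ∀ (c : ℝ) z, Zn (c • z) = |c| * Zn z)
    (hP0 : ∀ z, Pn z = 0 ↔ z = 0)
    (hPadd : ∀ z w, Pn (z + w) ≤ Pn z + Pn w)
    (hPsmul : ∀ (c : ℝ) z, Pn (c • z) = |c| * Pn z)
    (L β ν η : ℝ) (hη : 0 ≤ η)
    (hL : L = sSup {r : ℝ | ∃ v : V, v ≠ 0 ∧ r = Zn (fun i => ℓ i v) / ‖v‖})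
    (hβ : β = sInf {r : ℝ | ∃ v ∈ Tn, v ≠ 0 ∧ r = Zn (fun i => ℓ i v) / ‖v‖})
    (hν : ν = sSup {r : ℝ | ∃ z : Fin m → ℝ, z ≠ 0 ∧ r = Zn z / Pn z})
    (hβpos : 0 < β)
    (f vstar : V) (z : Fin m → ℝ)
    (hz : Pn (z - fun i => ℓ i f) ≤ η)
    (hvTn : vstar ∈ Tn)
    (hmin : ∀ w ∈ Tn, Zn ((fun i => ℓ i vstar) - z) ≤ Zn ((fun i => ℓ i w) - z)) :
    ‖f - vstar‖ ≤ (1 + 2 * L * β⁻¹) * sInf {r : ℝ | ∃ w ∈ Tn, r = ‖w - f‖}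
      + 4 * ν * β⁻¹ * η := by
  have hZnn : ∀ w, 0 ≤ Zn w := aux_nonneg hZadd hZsmul
  have hPnn : ∀ w, 0 ≤ Pn w := aux_nonneg hPadd hPsmul
  have hZzero : Zn 0 = 0 := aux_zero hZsmul
  have hZneg : ∀ w, Zn (-w) = Zn w := aux_neg hZsmul
  set CZ : ℝ := ∑ i, Zn (Pi.single i (1:ℝ)) with hCZ
  have hCZbd : ∀ w, Zn w ≤ CZ * ‖w‖ := aux_bound hZadd hZsmul
  have hCZnn : 0 ≤ CZ := Finset.sum_nonneg fun i _ => hZnn _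
  -- the β set
  set Sβ : Set ℝ := {r : ℝ | ∃ v ∈ Tn, v ≠ 0 ∧ r = Zn (fun i => ℓ i v) / ‖v‖} with hSβ
  have hSβbdd : BddBelow Sβ := by
    refine ⟨0, fun r hr => ?_⟩
    obtain ⟨v, hv, hvne, rfl⟩ := hr
    exact div_nonneg (hZnn _) (norm_nonneg v)
  have hSβne : Sβ.Nonempty := by
    by_contra h
    rw [Set.not_nonempty_iff_eq_empty] at h
    rw [hβ, h, Real.sInf_empty] at hβpos
    exact lt_irrefl 0 hβpos
  obtain ⟨r0, v0, hv0Tn, hv0ne, hr0⟩ := hSβne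
  have hβle : ∀ v ∈ Tn, β * ‖v‖ ≤ Zn (fun i => ℓ i v) := by
    intro v hv
    rcases eq_or_ne v 0 with rfl | hvne
    · have : (fun i => ℓ i (0:V)) = (0 : Fin m → ℝ) := by
        funext i; simp
      rw [this, hZzero]; simp
    · have hmem : Zn (fun i => ℓ i v) / ‖v‖ ∈ Sβ := ⟨v, hv, hvne, rfl⟩
      have := hβ ▸ csInf_le hSβbdd hmem
      have hvpos : (0:ℝ) < ‖v‖ := norm_pos_iff.mpr hvne
      rw [le_div_iff₀ hvpos] at this
      exact this
  -- the nonzero z0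
  set z0 : Fin m → ℝ := fun i => ℓ i v0 with hz0def
  have hz0ne : z0 ≠ 0 := by
    intro h
    have h1 := hβle v0 hv0Tn
    rw [← hz0def, h, hZzero] at h1
    have : (0:ℝ) < ‖v0‖ := norm_pos_iff.mpr hv0ne
    nlinarith
  -- L facts
  set SL : Set ℝ := {r : ℝ | ∃ v : V, v ≠ 0 ∧ r = Zn (fun i => ℓ i v) / ‖v‖} with hSL
  have hSLne : SL.Nonempty := ⟨Zn (fun i => ℓ i v0) / ‖v0‖, v0, hv0ne, rfl⟩
  have hSLbdd : BddAbove SL := by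
    refine ⟨CZ * (∑ j, ‖ℓ j‖), fun r hr => ?_⟩
    obtain ⟨v, hvne, rfl⟩ := hr
    have hvpos : (0:ℝ) < ‖v‖ := norm_pos_iff.mpr hvne
    rw [div_le_iff₀ hvpos]
    have h1 : Zn (fun i => ℓ i v) ≤ CZ * ‖fun i => ℓ i v‖ := hCZbd _
    have h2 : ‖fun i => ℓ i v‖ ≤ (∑ j, ‖ℓ j‖) * ‖v‖ := by
      refine pi_norm_le_iff_of_nonneg (by positivity) |>.mpr fun i => ?_
      calc ‖ℓ i v‖ ≤ ‖ℓ i‖ * ‖v‖ := (ℓ i).le_opNorm v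
        _ ≤ (∑ j, ‖ℓ j‖) * ‖v‖ := by
            refine mul_le_mul_of_nonneg_right ?_ (norm_nonneg v)
            exact Finset.single_le_sum (fun j _ => norm_nonneg (ℓ j)) (Finset.mem_univ i)
    calc Zn (fun i => ℓ i v) ≤ CZ * ‖fun i => ℓ i v‖ := h1
      _ ≤ CZ * ((∑ j, ‖ℓ j‖) * ‖v‖) := mul_le_mul_of_nonneg_left h2 hCZnn
      _ = CZ * (∑ j, ‖ℓ j‖) * ‖v‖ := by ring
  have hLle : ∀ v : V, Zn (fun i => ℓ i v) ≤ L * ‖v‖ := by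
    intro v
    rcases eq_or_ne v 0 with rfl | hvne
    · have : (fun i => ℓ i (0:V)) = (0 : Fin m → ℝ) := by funext i; simp
      rw [this, hZzero]; simp
    · have hmem : Zn (fun i => ℓ i v) / ‖v‖ ∈ SL := ⟨v, hvne, rfl⟩
      have := hL ▸ le_csSup hSLbdd hmem
      have hvpos : (0:ℝ) < ‖v‖ := norm_pos_iff.mpr hvne
      rw [div_le_iff₀ hvpos] at this
      exact this
  have hLnn : 0 ≤ L := by
    have hmem : Zn (fun i => ℓ i v0) / ‖v0‖ ∈ SL := ⟨v0, hv0ne, rfl⟩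
    have h1 := hL ▸ le_csSup hSLbdd hmem
    have : 0 ≤ Zn (fun i => ℓ i v0) / ‖v0‖ := div_nonneg (hZnn _) (norm_nonneg _)
    linarith
  -- Pn lower bound
  obtain ⟨c, hcpos, hclow⟩ := aux_lower hP0 hPadd hPsmul z0 hz0ne
  -- ν facts
  set Sν : Set ℝ := {r : ℝ | ∃ w : Fin m → ℝ, w ≠ 0 ∧ r = Zn w / Pn w} with hSν
  have hSνne : Sν.Nonempty := ⟨Zn z0 / Pn z0, z0, hz0ne, rfl⟩
  have hPpos : ∀ w : Fin m → ℝ, w ≠ 0 → 0 < Pn w := by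
    intro w hw
    rcases lt_or_eq_of_le (hPnn w) with h | h
    · exact h
    · exact absurd ((hP0 w).mp h.symm) hw
  have hSνbdd : BddAbove Sν := by
    refine ⟨CZ / c, fun r hr => ?_⟩
    obtain ⟨w, hwne, rfl⟩ := hr
    have h1 : Zn w ≤ CZ * ‖w‖ := hCZbd w
    have h2 : c * ‖w‖ ≤ Pn w := hclow w
    have h3 : 0 < Pn w := hPpos w hwne
    rw [div_le_div_iff₀ h3 hcpos]
    nlinarith [norm_nonneg w]
  have hνle : ∀ w : Fin m → ℝ, Zn w ≤ ν * Pn w := by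
    intro w
    rcases eq_or_ne w 0 with rfl | hwne
    · rw [hZzero, (hP0 0).mpr rfl]; simp
    · have hmem : Zn w / Pn w ∈ Sν := ⟨w, hwne, rfl⟩
      have := hν ▸ le_csSup hSνbdd hmem
      rw [div_le_iff₀ (hPpos w hwne)] at this
      linarith [this]
  have hνnn : 0 ≤ ν := by
    have hmem : Zn z0 / Pn z0 ∈ Sν := ⟨z0, hz0ne, rfl⟩
    have h1 := hν ▸ le_csSup hSνbdd hmem
    have : 0 ≤ Zn z0 / Pn z0 := div_nonneg (hZnn _) (hPnn _)
    linarith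
  -- key per-w bound
  have hkey : ∀ w ∈ Tn, ‖f - vstar‖ ≤ (1 + 2 * L * β⁻¹) * ‖w - f‖ + 2 * ν * β⁻¹ * η := by
    intro w hw
    have h1 : ‖f - vstar‖ ≤ ‖f - w‖ + ‖w - vstar‖ := by
      have : f - vstar = (f - w) + (w - vstar) := by abel
      rw [this]; exact norm_add_le _ _
    have hwv : w - vstar ∈ Tn := Tn.sub_mem hw hvTn
    have h2 : β * ‖w - vstar‖ ≤ Zn (fun i => ℓ i (w - vstar)) := hβle _ hwv
    have heq : (fun i => ℓ i (w - vstar)) =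
        ((fun i => ℓ i w) - z) + (z - fun i => ℓ i vstar) := by
      funext i; simp [map_sub]
    have h3 : Zn (fun i => ℓ i (w - vstar)) ≤
        Zn ((fun i => ℓ i w) - z) + Zn (z - fun i => ℓ i vstar) := by
      rw [heq]; exact hZadd _ _
    have h4 : Zn (z - fun i => ℓ i vstar) = Zn ((fun i => ℓ i vstar) - z) := by
      rw [← hZneg ((fun i => ℓ i vstar) - z), neg_sub]
    have h5 := hmin w hw
    have h6 : Zn ((fun i => ℓ i w) - z) ≤ L * ‖w - f‖ + ν * η := by
      have heq2 : (fun i => ℓ i w) - z =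
          (fun i => ℓ i (w - f)) + ((fun i => ℓ i f) - z) := by
        funext i; simp [map_sub]
      have h7 : Zn ((fun i => ℓ i w) - z) ≤
          Zn (fun i => ℓ i (w - f)) + Zn ((fun i => ℓ i f) - z) := by
        rw [heq2]; exact hZadd _ _
      have h8 : Zn (fun i => ℓ i (w - f)) ≤ L * ‖w - f‖ := hLle _
      have h9 : Zn ((fun i => ℓ i f) - z) ≤ ν * η := by
        have h10 : Zn ((fun i => ℓ i f) - z) ≤ ν * Pn ((fun i => ℓ i f) - z) := hνle _
        have h11 : Pn ((fun i => ℓ i f) - z) = Pn (z - fun i => ℓ i f) := by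
          rw [← aux_neg hPsmul ((fun i => ℓ i f) - z), neg_sub]
        rw [h11] at h10
        calc Zn ((fun i => ℓ i f) - z) ≤ ν * Pn (z - fun i => ℓ i f) := h10
          _ ≤ ν * η := mul_le_mul_of_nonneg_left hz hνnn
      linarith
    have hnorm : ‖w - vstar‖ ≤ (2 * L * ‖w - f‖ + 2 * ν * η) / β := by
      rw [le_div_iff₀ hβpos]
      nlinarith
    have hfw : ‖f - w‖ = ‖w - f‖ := norm_sub_rev f w
    calc ‖f - vstar‖ ≤ ‖f - w‖ + ‖w - vstar‖ := h1
      _ ≤ ‖w - f‖ + (2 * L * ‖w - f‖ + 2 * ν * η) / β := by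
          rw [hfw]; linarith
      _ = (1 + 2 * L * β⁻¹) * ‖w - f‖ + 2 * ν * β⁻¹ * η := by
          field_simp; ring
  -- conclude via infimum
  set SD : Set ℝ := {r : ℝ | ∃ w ∈ Tn, r = ‖w - f‖} with hSD
  have hSDne : SD.Nonempty := ⟨‖(0:V) - f‖, 0, Tn.zero_mem, rfl⟩
  have hcpos' : (0:ℝ) < 1 + 2 * L * β⁻¹ := by positivity
  have hle : (‖f - vstar‖ - 2 * ν * β⁻¹ * η) / (1 + 2 * L * β⁻¹) ≤ sInf SD := by
    refine le_csInf hSDne fun r hr => ?_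
    obtain ⟨w, hw, rfl⟩ := hr
    rw [div_le_iff₀ hcpos']
    have := hkey w hw
    nlinarith
  rw [div_le_iff₀ hcpos'] at hle
  have hextra : 0 ≤ ν * β⁻¹ * η := by positivity
  nlinarith
end
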